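/- With V, I₁, I₂, I₃ and Φ = Σ I_k ⊗ I_k as above, a 2-form ω lies in the 3-eigenspace of Φ if and only if ω is of type (1,1) with respect to all complex structures I_a, a ∈ S²; i.e. ω(I_a v, I_a w) = ω(v, w) for all unit vectors a ∈ ℝ³ and all v, w ∈ V. -/

import Mathlib

/-!
Pulling `Φ ω` back along `I₁` permutes its summands `ω ∘ (I₂, I₂)`, `ω ∘ (I₃, I₃)` and turns
`ω ∘ (I₁, I₁)` into `ω`, so `(Φ ω) ∘ (I₁, I₁) = Φ ω - ω ∘ (I₁, I₁) + ω`. If `Φ ω = 3 ω` this reads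
`4 ω ∘ (I₁, I₁) = 4 ω`, and likewise for `I₂`, `I₃`. Invariance under two anticommuting complex structures `J`, `K` kills the
mixed terms `ω (J v) (K w) + ω (K v) (J w)`, so expanding `ω (I_a v) (I_a w)` leaves
`(a₁² + a₂² + a₃²) ω v w`. Conversely, the choices `a = e₁, e₂, e₃` give `Φ ω = ω + ω + ω`.
-/

/-- The endomorphism Φ = Σ Iₖ ⊗ Iₖ of the space of (bilinear) 2-forms on V. -/
noncomputable def quatPhi {V : Type*} [AddCommGroup V] [Module ℝ V] (I₁ I₂ I₃ : V →ₗ[ℝ] V)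
    (ω : V →ₗ[ℝ] V →ₗ[ℝ] ℝ) : V →ₗ[ℝ] V →ₗ[ℝ] ℝ :=
  ω.compl₁₂ I₁ I₁ + ω.compl₁₂ I₂ I₂ + ω.compl₁₂ I₃ I₃

section ComplexStructures

variable {R V : Type*} [CommRing R] [AddCommGroup V] [Module R V]
  {J K L : V →ₗ[R] V} {ω : V →ₗ[R] V →ₗ[R] R}

theorem LinearMap.apply_add_apply_eq_zero_of_anticomm
    (hJ : ∀ v, J (J v) = -v) (hK : ∀ v, K (K v) = -v) (hKJ : ∀ v, K (J v) = -J (K v))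
    (hωJ : ω.compl₁₂ J J = ω) (hωK : ω.compl₁₂ K K = ω) (v w : V) :
    ω (J v) (K w) + ω (K v) (J w) = 0 := by
  have eJ := LinearMap.congr_fun₂ hωJ (J v) (K w)
  have eK := LinearMap.congr_fun₂ hωK (K v) (J w)
  simp only [LinearMap.compl₁₂_apply, hJ, hK, hKJ, map_neg, LinearMap.neg_apply, neg_neg] at eJ eK
  linear_combination -eK - eJ

theorem LinearMap.apply_smul_add_smul_add_smul_eq
    (hJ : ∀ v, J (J v) = -v) (hK : ∀ v, K (K v) = -v) (hL : ∀ v, L (L v) = -v)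
    (hKJ : ∀ v, K (J v) = -J (K v)) (hLK : ∀ v, L (K v) = -K (L v))
    (hLJ : ∀ v, L (J v) = -J (L v))
    (hωJ : ω.compl₁₂ J J = ω) (hωK : ω.compl₁₂ K K = ω) (hωL : ω.compl₁₂ L L = ω)
    {a b c : R} (habc : a ^ 2 + b ^ 2 + c ^ 2 = 1) (v w : V) :
    ω ((a • J + b • K + c • L) v) ((a • J + b • K + c • L) w) = ω v w := by
  have eJ := LinearMap.congr_fun₂ hωJ v w
  have eK := LinearMap.congr_fun₂ hωK v w
  have eL := LinearMap.congr_fun₂ hωL v w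
  simp only [LinearMap.compl₁₂_apply] at eJ eK eL
  simp only [LinearMap.add_apply, LinearMap.smul_apply, map_add, map_smul, smul_eq_mul]
  linear_combination a ^ 2 * eJ + b ^ 2 * eK + c ^ 2 * eL + ω v w * habc
    + a * b * apply_add_apply_eq_zero_of_anticomm hJ hK hKJ hωJ hωK v w
    + b * c * apply_add_apply_eq_zero_of_anticomm hK hL hLK hωK hωL v w
    + a * c * apply_add_apply_eq_zero_of_anticomm hJ hL hLJ hωJ hωL v w

end ComplexStructures

section QuatPhi

variable {V : Type*} [AddCommGroup V] [Module ℝ V] {I₁ I₂ I₃ : V →ₗ[ℝ] V}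
  {ω : V →ₗ[ℝ] V →ₗ[ℝ] ℝ}

theorem quatPhi_rotate : quatPhi I₁ I₂ I₃ = quatPhi I₂ I₃ I₁ := by
  ext ω : 1
  simp only [quatPhi]
  abel

theorem compl₁₂_quatPhi (h1 : ∀ v, I₁ (I₁ v) = -v) (h21 : ∀ v, I₂ (I₁ v) = -I₃ v)
    (h31 : ∀ v, I₃ (I₁ v) = I₂ v) :
    (quatPhi I₁ I₂ I₃ ω).compl₁₂ I₁ I₁ = ω + ω.compl₁₂ I₃ I₃ + ω.compl₁₂ I₂ I₂ := by
  ext v w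
  simp [quatPhi, h1, h21, h31]

theorem compl₁₂_eq_self_of_quatPhi_eq_three_smul (h1 : ∀ v, I₁ (I₁ v) = -v)
    (h21 : ∀ v, I₂ (I₁ v) = -I₃ v) (h31 : ∀ v, I₃ (I₁ v) = I₂ v)
    (hω : quatPhi I₁ I₂ I₃ ω = (3 : ℝ) • ω) : ω.compl₁₂ I₁ I₁ = ω := by
  have pulled := compl₁₂_quatPhi (ω := ω) h1 h21 h31
  rw [hω] at pulled
  ext v w
  have e₁ := LinearMap.congr_fun₂ pulled v w
  have e₂ := LinearMap.congr_fun₂ hω v w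
  simp only [quatPhi, LinearMap.compl₁₂_apply, LinearMap.add_apply, LinearMap.smul_apply,
    smul_eq_mul] at e₁ e₂ ⊢
  linarith

theorem quatPhi_eq_three_smul_of_compl₁₂_eq_self (hω₁ : ω.compl₁₂ I₁ I₁ = ω)
    (hω₂ : ω.compl₁₂ I₂ I₂ = ω) (hω₃ : ω.compl₁₂ I₃ I₃ = ω) :
    quatPhi I₁ I₂ I₃ ω = (3 : ℝ) • ω := by
  rw [quatPhi, hω₁, hω₂, hω₃]
  module

end QuatPhi

/-- A 2-form ω lies in the 3-eigenspace of Φ = Σ Iₖ ⊗ Iₖ if and only if ω is of type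
(1,1) with respect to all the complex structures Iₐ = a₁I₁ + a₂I₂ + a₃I₃, a ∈ S²,
i.e. ω(Iₐ v, Iₐ w) = ω(v, w) for all unit a ∈ ℝ³ and all v, w ∈ V. -/
theorem mem_three_eigenspace_iff_type_one_one {V : Type*} [AddCommGroup V] [Module ℝ V]
    (I₁ I₂ I₃ : V →ₗ[ℝ] V)
    (h1 : ∀ v, I₁ (I₁ v) = -v) (h2 : ∀ v, I₂ (I₂ v) = -v) (h3 : ∀ v, I₃ (I₃ v) = -v)
    (h12 : ∀ v, I₁ (I₂ v) = I₃ v) (h23 : ∀ v, I₂ (I₃ v) = I₁ v) (h31 : ∀ v, I₃ (I₁ v) = I₂ v)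
    (h21 : ∀ v, I₂ (I₁ v) = -I₃ v) (h32 : ∀ v, I₃ (I₂ v) = -I₁ v)
    (h13 : ∀ v, I₁ (I₃ v) = -I₂ v)
    (ω : V →ₗ[ℝ] V →ₗ[ℝ] ℝ) :
    quatPhi I₁ I₂ I₃ ω = (3 : ℝ) • ω ↔
      ∀ a₁ a₂ a₃ : ℝ, a₁ ^ 2 + a₂ ^ 2 + a₃ ^ 2 = 1 →
        ∀ v w, ω ((a₁ • I₁ + a₂ • I₂ + a₃ • I₃) v) ((a₁ • I₁ + a₂ • I₂ + a₃ • I₃) w)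
          = ω v w := by
  constructor
  · intro hω a₁ a₂ a₃ ha
    have hω₁ := compl₁₂_eq_self_of_quatPhi_eq_three_smul h1 h21 h31 hω
    rw [quatPhi_rotate] at hω
    have hω₂ := compl₁₂_eq_self_of_quatPhi_eq_three_smul h2 h32 h12 hω
    rw [quatPhi_rotate] at hω
    have hω₃ := compl₁₂_eq_self_of_quatPhi_eq_three_smul h3 h13 h23 hω
    exact LinearMap.apply_smul_add_smul_add_smul_eq h1 h2 h3
      (fun v ↦ by rw [h21, h12]) (fun v ↦ by rw [h32, h23]) (fun v ↦ by rw [h31, h13, neg_neg])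
      hω₁ hω₂ hω₃ ha
  · intro h
    apply quatPhi_eq_three_smul_of_compl₁₂_eq_self <;> ext v w
    · simpa using h 1 0 0 (by norm_num) v w
    · simpa using h 0 1 0 (by norm_num) v w
    · simpa using h 0 0 1 (by norm_num) v w
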